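/- Let 0 < η < 1/4. For all U, U′, U″ ∈ ℝ³ with Euclidean norms ‖U‖ < 1, ‖U′‖ < 1, ‖U″‖ < 1, one has λ₁(U) < λ₂(U′) < λ₃(U″), where λ₁(u,v,w) = 2η(w − (v−2)u) − 4, λ₂(u,v,w) = 2v, λ₃(u,v,w) = 2η(w − vu) + 4. In particular, for every U with ‖U‖ < 1 the three characteristic speeds satisfy λ₁(U) < λ₂(U) < λ₃(U), i.e., the Baiti–Jenssen system is strictly hyperbolic on the unit ball, with the speed ranges of the three families uniformly separated. -/
import Mathlib

lemma bj_aux1 (η u v w : ℝ) (hη0 : 0 < η) (hη1 : η < 1/4) (h : u^2+v^2+w^2 < 1) :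
    2*η*(w - (v-2)*u) - 4 < -2 := by
  nlinarith [sq_nonneg (w-1), sq_nonneg (u+1), sq_nonneg (u-1), sq_nonneg (v*u+1),
    sq_nonneg (v+u), sq_nonneg (v-u), sq_nonneg v, sq_nonneg u, sq_nonneg w,
    mul_pos hη0 hη0]

lemma bj_aux3 (η u v w : ℝ) (hη0 : 0 < η) (hη1 : η < 1/4) (h : u^2+v^2+w^2 < 1) :
    2 < 2*η*(w - v*u) + 4 := by
  nlinarith [sq_nonneg (w+1), sq_nonneg (v+u), sq_nonneg (v-u), sq_nonneg v,
    sq_nonneg u, sq_nonneg w]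

lemma bj_aux2 (u v w : ℝ) (h : u^2+v^2+w^2 < 1) : -2 < 2*v ∧ 2*v < 2 := by
  constructor <;> nlinarith [sq_nonneg v, sq_nonneg u, sq_nonneg w]

/-- The first characteristic speed of the Baiti–Jenssen system with parameter `η`. -/
noncomputable def BJlambda1 (η : ℝ) : ℝ × ℝ × ℝ → ℝ :=
  fun U => 2 * η * (U.2.2 - (U.2.1 - 2) * U.1) - 4

/-- The second characteristic speed of the Baiti–Jenssen system. -/
noncomputable def BJlambda2 : ℝ × ℝ × ℝ → ℝ := fun U => 2 * U.2.1

/-- The third characteristic speed of the Baiti–Jenssen system with parameter `η`. -/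
noncomputable def BJlambda3 (η : ℝ) : ℝ × ℝ × ℝ → ℝ :=
  fun U => 2 * η * (U.2.2 - U.2.1 * U.1) + 4

theorem bj_strict_hyperbolicity (η : ℝ) (hη0 : 0 < η) (hη1 : η < 1 / 4) :
    (∀ U U' U'' : ℝ × ℝ × ℝ,
        U.1 ^ 2 + U.2.1 ^ 2 + U.2.2 ^ 2 < 1 →
        U'.1 ^ 2 + U'.2.1 ^ 2 + U'.2.2 ^ 2 < 1 →
        U''.1 ^ 2 + U''.2.1 ^ 2 + U''.2.2 ^ 2 < 1 →
        BJlambda1 η U < BJlambda2 U' ∧ BJlambda2 U' < BJlambda3 η U'') ∧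
    (∀ U : ℝ × ℝ × ℝ, U.1 ^ 2 + U.2.1 ^ 2 + U.2.2 ^ 2 < 1 →
        BJlambda1 η U < BJlambda2 U ∧ BJlambda2 U < BJlambda3 η U) := by
  have main : ∀ U U' U'' : ℝ × ℝ × ℝ,
      U.1 ^ 2 + U.2.1 ^ 2 + U.2.2 ^ 2 < 1 →
      U'.1 ^ 2 + U'.2.1 ^ 2 + U'.2.2 ^ 2 < 1 →
      U''.1 ^ 2 + U''.2.1 ^ 2 + U''.2.2 ^ 2 < 1 →
      BJlambda1 η U < BJlambda2 U' ∧ BJlambda2 U' < BJlambda3 η U'' := by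
    intro U U' U'' h h' h''
    have h1 := bj_aux1 η U.1 U.2.1 U.2.2 hη0 hη1 h
    have h2 := bj_aux2 U'.1 U'.2.1 U'.2.2 h'
    have h3 := bj_aux3 η U''.1 U''.2.1 U''.2.2 hη0 hη1 h''
    simp only [BJlambda1, BJlambda2, BJlambda3]
    constructor <;> linarith [h2.1, h2.2]
  exact ⟨main, fun U hU => main U U U hU hU hU⟩
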